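/- arXiv:quant-ph/0309177 — 8 statements merged into one kernel-verified Lean document; each statement's English description precedes it below -/
import Mathlib

section
/- Let n ≥ 2 and let x_1,…,x_n : ℝ → ℝ be functions, each differentiable at 0, whose values x_1(0),…,x_n(0) are pairwise distinct, strictly positive, and sum to 1. Fix q with 2 ≤ q ≤ n and suppose that for all t in a neighbourhood of 0 the elementary symmetric polynomials satisfy e_j(x_1(t),…,x_n(t)) = e_j(x_1(0),…,x_n(0)) for every j ∈ {1,…,n} with j ≠ q, while e_q(x_1(t),…,x_n(t)) = e_q(x_1(0),…,x_n(0)) + t. Then the function t ↦ −∑_{k=1}^n x_k(t)·ln(x_k(t)) has a strictly positive derivative at t = 0. (This is the statement ∂S/∂s_q > 0 for q ≥ 2, where S is the Shannon entropy viewed as a function of the symmetric polynomials s_1,…,s_n.) -/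
/-!
Write `a k = x k 0`. The hypotheses on the elementary symmetric polynomials say that near `t = 0`
`∏ (X - x_k(t)) = ∏ (X - a_k) + (-1)^q t X^(n-q)`, so differentiating at the simple root `a_k`
gives `x_k'(0) = -(-1)^q a_k^(n-q) / ∏_{l ≠ k} (a_k - a_l)`. As `S' = -∑ x_k' (log a_k + 1)`, the
derivative of the entropy is `(-1)^q` times the divided difference of `f z = z^(n-q) (log z + 1)`
at the nodes `a_k`. Applying Rolle's theorem `n - 1` times to `f` minus its interpolation
polynomial, this divided difference is `f^(n-1)(ξ) / (n-1)!` for some `ξ > 0`, and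
`f^(n-1)(ξ) = (n-q)! (-1)^q (q-2)! ξ^(1-q)` has the sign of `(-1)^q`.
-/

noncomputable def esymm (n k : ℕ) (x : Fin n → ℝ) : ℝ :=
  ∑ s ∈ Finset.powersetCard k (Finset.univ : Finset (Fin n)), ∏ i ∈ s, x i

open Polynomial Lagrange
open scoped Finset Nat Topology

section IterateDeriv

variable {𝕜 : Type*} [NontriviallyNormedField 𝕜] {f g : 𝕜 → 𝕜} {U : Set 𝕜}

theorem Set.EqOn.iterate_deriv (h : U.EqOn f g) (hU : IsOpen U) (k : ℕ) :
    U.EqOn (_root_.deriv^[k] f) (_root_.deriv^[k] g) := by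
  induction k with
  | zero => exact h
  | succ k ih => simpa only [Function.iterate_succ_apply'] using ih.deriv hU

theorem ContDiffOn.continuousOn_iterate_deriv {n : WithTop ℕ∞} {k : ℕ} (hf : ContDiffOn 𝕜 n f U)
    (hU : IsOpen U) (hk : k ≤ n) : ContinuousOn (deriv^[k] f) U :=
  (hf.continuousOn_iteratedDerivWithin hk hU.uniqueDiffOn).congr
    (iteratedDerivWithin_of_isOpen_eq_iterate hU).symm

theorem iterate_deriv_sub_eqOn {k : ℕ} (hf : ContDiffOn 𝕜 k f U) (hg : ContDiffOn 𝕜 k g U)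
    (hU : IsOpen U) : U.EqOn (deriv^[k] (f - g)) (deriv^[k] f - deriv^[k] g) := by
  intro x hx
  simp only [Pi.sub_apply, ← iteratedDerivWithin_of_isOpen_eq_iterate hU hx]
  exact iteratedDerivWithin_sub hx hU.uniqueDiffOn (hf x hx) (hg x hx)

theorem Polynomial.iterate_deriv_eval (p : 𝕜[X]) (k : ℕ) :
    deriv^[k] (fun x => p.eval x) = fun x => (derivative^[k] p).eval x := by
  induction k with
  | zero => rfl
  | succ k ih =>
    rw [Function.iterate_succ_apply', ih, Function.iterate_succ_apply']
    funext x
    exact Polynomial.deriv _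

end IterateDeriv

section Rolle

variable {f : ℝ → ℝ} {U : Set ℝ}

theorem exists_finset_deriv_eq_zero (hU : U.OrdConnected) (hf : ContinuousOn f U)
    {t : Finset ℝ} (htU : ↑t ⊆ U) (hft : ∀ y ∈ t, f y = 0) :
    ∃ u : Finset ℝ, ↑u ⊆ U ∧ (∀ y ∈ u, deriv f y = 0) ∧ #t ≤ #u + 1 := by
  classical
  -- Strengthened so that the new zero found to the right of `t` is not already in `u`.
  suffices ∃ u : Finset ℝ, ↑u ⊆ U ∧ (∀ y ∈ u, deriv f y = 0 ∧ ∃ x ∈ t, y < x) ∧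
      #t ≤ #u + 1 by
    obtain ⟨u, huU, hu, hcard⟩ := this
    exact ⟨u, huU, fun y hy => (hu y hy).1, hcard⟩
  induction t using Finset.induction_on_max with
  | empty => exact ⟨∅, by simp, by simp, by simp⟩
  | insert a t hlt ih =>
    have htU' : ↑t ⊆ U := fun y hy => htU (Finset.mem_insert_of_mem hy)
    obtain ⟨u, huU, hu, hcard⟩ := ih htU' fun y hy => hft y (Finset.mem_insert_of_mem hy)
    rcases t.eq_empty_or_nonempty with rfl | hne
    · exact ⟨∅, by simp, by simp, by simp⟩
    set b := t.max' hne
    have hb : b ∈ t := t.max'_mem hne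
    have haU : a ∈ U := htU (Finset.mem_insert_self a t)
    obtain ⟨c, hc, hc0⟩ := exists_deriv_eq_zero (hlt b hb) (hf.mono (hU.out (htU' hb) haU))
      (by rw [hft b (Finset.mem_insert_of_mem hb), hft a (Finset.mem_insert_self a t)])
    have hcu : c ∉ u := fun hcu => by
      obtain ⟨x, hx, hcx⟩ := (hu c hcu).2
      linarith [t.le_max' x hx, hc.1]
    refine ⟨insert c u, ?_, ?_, ?_⟩
    · rw [Finset.coe_insert]
      exact Set.insert_subset (hU.out (htU' hb) haU (Set.Ioo_subset_Icc_self hc)) huU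
    · intro y hy
      rcases Finset.mem_insert.mp hy with rfl | hy
      · exact ⟨hc0, a, Finset.mem_insert_self a t, hc.2⟩
      · obtain ⟨h0, x, hx, hyx⟩ := hu y hy
        exact ⟨h0, x, Finset.mem_insert_of_mem hx, hyx⟩
    · rw [Finset.card_insert_of_notMem fun ha => (hlt a ha).false, Finset.card_insert_of_notMem hcu]
      omega

theorem exists_iterate_deriv_eq_zero (hU : U.OrdConnected) {k : ℕ}
    (hf : ∀ j < k, ContinuousOn (deriv^[j] f) U) {t : Finset ℝ} (htU : ↑t ⊆ U)
    (hft : ∀ y ∈ t, f y = 0) (hk : k < #t) : ∃ ξ ∈ U, deriv^[k] f ξ = 0 := by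
  induction k generalizing f t with
  | zero =>
    obtain ⟨y, hy⟩ := Finset.card_pos.mp hk
    exact ⟨y, htU hy, hft y hy⟩
  | succ k ih =>
    obtain ⟨u, huU, hu, hcard⟩ :=
      exists_finset_deriv_eq_zero hU (hf 0 k.succ_pos) htU hft
    exact ih (fun j hj => hf (j + 1) (by omega)) huU hu (by omega)

end Rolle

section DividedDifference

variable {ι : Type*} [DecidableEq ι]

noncomputable def divDiff (s : Finset ι) (v : ι → ℝ) (f : ℝ → ℝ) : ℝ :=
  ∑ i ∈ s, f (v i) / ∏ j ∈ s.erase i, (v i - v j)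

theorem exists_divDiff_eq_iterate_deriv {f : ℝ → ℝ} {U : Set ℝ} (hU : IsOpen U)
    (hU' : U.OrdConnected) {s : Finset ι} {v : ι → ℝ} (hvs : Set.InjOn v s)
    (hvU : ∀ i ∈ s, v i ∈ U) {k : ℕ} (hs : #s = k + 1) (hf : ContDiffOn ℝ k f U) :
    ∃ ξ ∈ U, divDiff s v f = deriv^[k] f ξ / k ! := by
  set p := interpolate s v (fun i => f (v i))
  have hp : ContDiffOn ℝ k (fun x => p.eval x) U := by
    simpa using (p.contDiff_aeval (k : WithTop ℕ∞) (𝕜 := ℝ)).contDiffOn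
  have hg : ContDiffOn ℝ k (f - fun x => p.eval x) U := hf.sub hp
  obtain ⟨ξ, hξU, hξ⟩ := exists_iterate_deriv_eq_zero hU'
    (fun j hj => hg.continuousOn_iterate_deriv hU (by exact_mod_cast hj.le)) (t := s.image v)
    (by simpa [Set.subset_def] using hvU)
    (by
      simp only [Finset.forall_mem_image, Pi.sub_apply]
      exact fun i hi => by rw [eval_interpolate_at_node _ hvs hi, sub_self])
    (by rw [Finset.card_image_of_injOn hvs]; omega)
  refine ⟨ξ, hξU, ?_⟩
  rw [iterate_deriv_sub_eqOn hf hp hU hξU, Pi.sub_apply, Polynomial.iterate_deriv_eval,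
    sub_eq_zero] at hξ
  beta_reduce at hξ
  rw [hξ, eval_iterate_derivative_eq_sum hvs (degree_interpolate_lt _ hvs) (by omega), hs]
  simp only [Nat.sub_self, Finset.powersetCard_zero, Finset.sum_singleton,
    Finset.prod_empty, mul_one]
  rw [mul_div_cancel_left₀ _ (by positivity)]
  exact Finset.sum_congr rfl fun i hi => by rw [eval_interpolate_at_node _ hvs hi]

end DividedDifference

section PowMulLog

open Real

theorem iterate_deriv_pow_mul_log_add_one_of_le {m k : ℕ} (hk : k ≤ m) : ∃ B : ℝ,
    (Set.Ioi 0).EqOn (deriv^[k] fun z => z ^ m * (log z + 1))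
      (fun z => m.descFactorial k * z ^ (m - k) * log z + B * z ^ (m - k)) := by
  induction k with
  | zero => exact ⟨1, fun z _ => by simp [mul_add]⟩
  | succ k ih =>
    obtain ⟨B, hB⟩ := ih (by omega)
    refine ⟨m.descFactorial k + B * (m - k : ℕ), fun z hz => ?_⟩
    have hmk : m - k = m - (k + 1) + 1 := by omega
    have hd : HasDerivAt (fun z => m.descFactorial k * z ^ (m - k) * log z + B * z ^ (m - k))
        (m.descFactorial k * ((m - k : ℕ) * z ^ (m - k - 1)) * log z
          + m.descFactorial k * z ^ (m - k) * z⁻¹ + B * ((m - k : ℕ) * z ^ (m - k - 1))) z :=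
      (((hasDerivAt_pow _ z).const_mul _).mul (hasDerivAt_log (Set.mem_Ioi.mp hz).ne')).add
        ((hasDerivAt_pow _ z).const_mul B)
    rw [Function.iterate_succ_apply', hB.deriv isOpen_Ioi hz, hd.deriv, Nat.descFactorial_succ,
      hmk, Nat.add_sub_cancel, pow_succ]
    have hz : z ≠ 0 := (Set.mem_Ioi.mp hz).ne'
    push_cast
    field_simp
    ring

theorem iterate_deriv_pow_mul_log_add_one (m j : ℕ) :
    (Set.Ioi 0).EqOn (deriv^[m + j + 1] fun z => z ^ m * (log z + 1))
      (fun z => m ! * ((-1) ^ j * j ! * z ^ (-1 - j : ℤ))) := by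
  obtain ⟨B, hB⟩ := iterate_deriv_pow_mul_log_add_one_of_le (le_refl m)
  simp only [Nat.descFactorial_self, Nat.sub_self, pow_zero, mul_one] at hB
  have hlog : deriv (fun z => (m ! : ℝ) * log z + B) = fun z : ℝ => (m ! : ℝ) * z⁻¹ := by
    ext z
    rw [deriv_add_const, deriv_const_mul_field', deriv_log']
  intro z hz
  rw [show m + j + 1 = j + 1 + m by ring, Function.iterate_add_apply,
    hB.iterate_deriv isOpen_Ioi (j + 1) hz, Function.iterate_succ_apply, hlog,
    ← iteratedDeriv_eq_iterate, iteratedDeriv_const_mul_field, iteratedDeriv_eq_iterate,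
    iter_deriv_inv]

theorem divDiff_pow_mul_log_add_one_pos {ι : Type*} [DecidableEq ι] {s : Finset ι} {v : ι → ℝ}
    (hvs : Set.InjOn v s) (hv : ∀ i ∈ s, 0 < v i) {m j : ℕ} (hs : #s = m + j + 2) :
    0 < (-1) ^ j * divDiff s v (fun z => z ^ m * (log z + 1)) := by
  have hf : ContDiffOn ℝ (m + j + 1 : ℕ) (fun z => z ^ m * (log z + 1)) (Set.Ioi 0) :=
    (contDiffOn_id.pow m).mul ((contDiffOn_log.mono fun z hz => (Set.mem_Ioi.mp hz).ne').add
      contDiffOn_const)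
  obtain ⟨ξ, hξ, hdiv⟩ := exists_divDiff_eq_iterate_deriv isOpen_Ioi Set.ordConnected_Ioi hvs hv
    hs hf
  have hsq : (-1 : ℝ) ^ j * (-1) ^ j = 1 := by rw [← mul_pow]; norm_num
  have hξ : 0 < ξ := hξ
  rw [hdiv, iterate_deriv_pow_mul_log_add_one m j hξ]
  calc (0 : ℝ) < m ! * j ! * ξ ^ (-1 - j : ℤ) / (m + j + 1) ! := by positivity
    _ = _ := by linear_combination (-(m ! * j ! * ξ ^ (-1 - j : ℤ) / (m + j + 1) !)) * hsq

end PowMulLog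

theorem coeff_nodal_univ_eq_esymm {n : ℕ} (y : Fin n → ℝ) {i : ℕ} (hi : i ≤ n) :
    (nodal Finset.univ y).coeff i = (-1) ^ (n - i) * esymm n (n - i) y := by
  have h := Multiset.prod_X_sub_C_coeff (Finset.univ.val.map y) (k := i) (by simpa using hi)
  rw [Multiset.map_map, Multiset.card_map, Finset.card_val, Finset.card_univ, Fintype.card_fin,
    Finset.esymm_map_val] at h
  exact h

theorem nodal_eq_add_of_esymm_eq {n q : ℕ} (hqn : q ≤ n) {y a : Fin n → ℝ} {t : ℝ}
    (hfix : ∀ j, 1 ≤ j → j ≤ n → j ≠ q → esymm n j y = esymm n j a)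
    (hvar : esymm n q y = esymm n q a + t) :
    nodal Finset.univ y = nodal Finset.univ a + C t * (C ((-1) ^ q) * X ^ (n - q)) := by
  ext i
  rw [coeff_add, coeff_C_mul, coeff_C_mul, coeff_X_pow]
  rcases lt_or_ge n i with hi | hi
  · have hdeg (z : Fin n → ℝ) : (nodal Finset.univ z).natDegree < i := by
      rwa [natDegree_nodal, Finset.card_univ, Fintype.card_fin]
    rw [coeff_eq_zero_of_natDegree_lt (hdeg y), coeff_eq_zero_of_natDegree_lt (hdeg a),
      if_neg (by omega)]
    ring
  rw [coeff_nodal_univ_eq_esymm y hi, coeff_nodal_univ_eq_esymm a hi]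
  rcases eq_or_ne (n - i) q with hq | hq
  · rw [if_pos (by omega), hq, hvar]
    ring
  rw [if_neg (by omega)]
  rcases Nat.eq_zero_or_pos (n - i) with h0 | h0
  · simp [h0, esymm]
  · rw [hfix _ h0 (by omega) hq]
    ring

theorem deriv_node_eq_of_nodal_eq_add {ι : Type*} [Fintype ι] [DecidableEq ι]
    {x : ι → ℝ → ℝ} {Q : ℝ[X]} (hinj : Function.Injective fun i => x i 0)
    (h : ∀ᶠ t in 𝓝 0,
      nodal Finset.univ (fun i => x i t) = nodal Finset.univ (fun i => x i 0) + C t * Q)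
    {k : ι} (hk : DifferentiableAt ℝ (x k) 0) :
    deriv (x k) 0 = -Q.eval (x k 0) * nodalWeight Finset.univ (fun i => x i 0) k := by
  set P := nodal Finset.univ (fun i => x i 0)
  have hzero : ∀ᶠ t in 𝓝 0, P.eval (x k t) + t * Q.eval (x k t) = 0 := by
    filter_upwards [h] with t ht
    have := congrArg (eval (x k t)) ht
    rw [eval_nodal_at_node (v := fun i => x i t) (Finset.mem_univ k)] at this
    simpa using this.symm
  have hd := ((P.hasDerivAt (x k 0)).comp 0 hk.hasDerivAt).add
    ((hasDerivAt_id 0).mul ((Q.hasDerivAt (x k 0)).comp 0 hk.hasDerivAt))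
  have h0 := hd.unique ((hasDerivAt_const 0 (0 : ℝ)).congr_of_eventuallyEq hzero)
  have hw := nodalWeight_eq_eval_derivative_nodal (v := fun i => x i 0) (Finset.mem_univ k)
  have hPw : P.derivative.eval (x k 0) * nodalWeight Finset.univ (fun i => x i 0) k = 1 := by
    rw [hw, mul_inv_cancel₀]
    exact mt inv_eq_zero.mpr (hw ▸ nodalWeight_ne_zero hinj.injOn (Finset.mem_univ k))
  simp only [Function.comp_apply, id, one_mul, zero_mul, add_zero] at h0
  linear_combination nodalWeight Finset.univ (fun i => x i 0) k * h0 - deriv (x k) 0 * hPw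

theorem hasDerivAt_neg_sum_mul_log {ι : Type*} [Fintype ι] {x : ι → ℝ → ℝ} {t₀ : ℝ}
    (hx : ∀ k, DifferentiableAt ℝ (x k) t₀) (hx₀ : ∀ k, x k t₀ ≠ 0) :
    HasDerivAt (fun t => -∑ k, x k t * Real.log (x k t))
      (∑ k, (-Real.log (x k t₀) - 1) * deriv (x k) t₀) t₀ := by
  have : (fun t => -∑ k, x k t * Real.log (x k t)) = fun t => ∑ k, Real.negMulLog (x k t) := by
    ext t
    simp [Real.negMulLog, Finset.sum_neg_distrib]
  rw [this]
  exact HasDerivAt.fun_sum fun k _ => (Real.hasDerivAt_negMulLog (hx₀ k)).comp t₀ (hx k).hasDerivAt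

theorem stmt_0_general (n : ℕ) (x : Fin n → ℝ → ℝ)
    (hdiff : ∀ k, DifferentiableAt ℝ (x k) 0)
    (hdist : ∀ k l, k ≠ l → x k 0 ≠ x l 0)
    (hpos : ∀ k, 0 < x k 0)
    (q : ℕ) (hq2 : 2 ≤ q) (hqn : q ≤ n)
    (hfix : ∀ᶠ t in nhds (0 : ℝ), ∀ j, 1 ≤ j → j ≤ n → j ≠ q →
      esymm n j (fun k => x k t) = esymm n j (fun k => x k 0))
    (hvar : ∀ᶠ t in nhds (0 : ℝ),
      esymm n q (fun k => x k t) = esymm n q (fun k => x k 0) + t) :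
    0 < deriv (fun t => -∑ k, x k t * Real.log (x k t)) 0 := by
  set a : Fin n → ℝ := fun k => x k 0
  have ha : Function.Injective a := fun k l h => by_contra fun hkl => hdist k l hkl h
  have hnodal : ∀ᶠ t in 𝓝 0, nodal Finset.univ (fun k => x k t) =
      nodal Finset.univ a + C t * (C ((-1) ^ q) * X ^ (n - q)) := by
    filter_upwards [hfix, hvar] with t hfixt hvart using nodal_eq_add_of_esymm_eq hqn hfixt hvart
  have hroot k := deriv_node_eq_of_nodal_eq_add ha hnodal (hdiff k)
  rw [(hasDerivAt_neg_sum_mul_log hdiff fun k => (hpos k).ne').deriv]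
  obtain ⟨m, j, rfl, rfl⟩ : ∃ m j, n = m + j + 2 ∧ q = j + 2 := ⟨n - q, q - 2, by omega, by omega⟩
  convert divDiff_pow_mul_log_add_one_pos (s := Finset.univ) (m := m) (j := j) ha.injOn
    (fun k _ => hpos k) (by simp) using 1
  rw [divDiff, Finset.mul_sum]
  refine Finset.sum_congr rfl fun k _ => ?_
  rw [hroot, Nat.add_sub_add_right, Nat.add_sub_cancel]
  simp only [nodalWeight, Finset.prod_inv_distrib, eval_mul, eval_C, eval_pow, eval_X]
  ring

/-- ∂S/∂s_q > 0 for 2 ≤ q ≤ n, where the Shannon entropy S is viewed as a function of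
the elementary symmetric polynomials s_1, …, s_n. -/
theorem stmt_0 (n : ℕ) (hn : 2 ≤ n) (x : Fin n → ℝ → ℝ)
    (hdiff : ∀ k, DifferentiableAt ℝ (x k) 0)
    (hdist : ∀ k l, k ≠ l → x k 0 ≠ x l 0)
    (hpos : ∀ k, 0 < x k 0)
    (hsum : ∑ k, x k 0 = 1)
    (q : ℕ) (hq2 : 2 ≤ q) (hqn : q ≤ n)
    (hfix : ∀ᶠ t in nhds (0 : ℝ), ∀ j, 1 ≤ j → j ≤ n → j ≠ q →
      esymm n j (fun k => x k t) = esymm n j (fun k => x k 0))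
    (hvar : ∀ᶠ t in nhds (0 : ℝ),
      esymm n q (fun k => x k t) = esymm n q (fun k => x k 0) + t) :
    0 < deriv (fun t => -∑ k, x k t * Real.log (x k t)) 0 :=
  stmt_0_general n x hdiff hdist hpos q hq2 hqn hfix hvar
end

section
/- Let n ≥ 2 and let x_1,…,x_n be pairwise distinct strictly positive reals with ∑_k x_k = 1. Then for every q with 2 ≤ q ≤ n, (−1)^q · ∑_{k=1}^n (x_k^{n−q} · ln x_k) / P_k > 0, where P_k = ∏_{i≠k}(x_k − x_i). -/
/-!
Put `m = n - q` and `c_k = (-1)^(q+1) x_k^m / P_k`, and consider `f(a) = ∑_k c_k log (a + x_k)`.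
Lagrange interpolation of `X^m` at the nodes `x_k` gives `∑_k c_k = 0` (as `m < n - 1`) and the
partial fraction decomposition `f'(a) = ∑_k c_k / (a + x_k) = a^m / ∏_k (a + x_k) > 0`. Since the
`c_k` sum to zero, `f(a) → 0` as `a → ∞`, so the strictly increasing `f` has `f(0) < 0`; and
`f(0)` is the negative of the quantity in question.
-/

open Finset Polynomial Filter Topology

namespace Lagrange

variable {F ι : Type*} [Field F] [DecidableEq ι] {s : Finset ι} {v : ι → F} {m : ℕ}

theorem sum_pow_div_prod_sub_eq_zero (hvs : Set.InjOn v s) (hm : m + 1 < #s) :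
    ∑ i ∈ s, v i ^ m / ∏ j ∈ s.erase i, (v i - v j) = 0 := by
  have h := coeff_eq_sum hvs (P := X ^ m) (by rw [degree_X_pow]; exact_mod_cast (by omega : m < #s))
  rw [coeff_X_pow, if_neg (by omega)] at h
  simpa using h.symm

theorem sum_pow_div_prod_sub_div_sub (hvs : Set.InjOn v s) (hm : m < #s) {t : F}
    (ht : ∀ i ∈ s, t ≠ v i) :
    ∑ i ∈ s, v i ^ m / (∏ j ∈ s.erase i, (v i - v j)) / (t - v i) =
      t ^ m / ∏ i ∈ s, (t - v i) := by
  have h := congrArg (eval t)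
    (eq_interpolate hvs (f := X ^ m) (by rw [degree_X_pow]; exact_mod_cast hm))
  rw [eval_interpolate_not_at_node _ ht, eval_nodal, eval_pow, eval_X] at h
  rw [h, mul_div_cancel_left₀ _ (prod_ne_zero_iff.2 fun i hi ↦ sub_ne_zero.2 (ht i hi))]
  refine sum_congr rfl fun i _ ↦ ?_
  rw [nodalWeight, prod_inv_distrib, eval_pow, eval_X]
  ring

theorem sum_pow_div_prod_sub_div_add (hvs : Set.InjOn v s) (hm : m < #s) {a : F}
    (ha : ∀ i ∈ s, a + v i ≠ 0) :
    ∑ i ∈ s, v i ^ m / (∏ j ∈ s.erase i, (v i - v j)) / (a + v i) =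
      (-1) ^ (#s + m + 1) * (a ^ m / ∏ i ∈ s, (a + v i)) := by
  have h := sum_pow_div_prod_sub_div_sub hvs hm (t := -a)
    fun i hi h ↦ ha i hi (by linear_combination -h)
  simp only [← neg_add', div_neg, sum_neg_distrib, prod_neg, neg_pow a] at h
  rw [← neg_neg (∑ i ∈ s, _), h, pow_add, pow_succ, ← div_div,
    div_eq_mul_inv _ ((-1) ^ #s), ← inv_pow, inv_neg_one]
  ring

end Lagrange

namespace Real

variable {ι : Type*} {s : Finset ι} {c x : ι → ℝ}

theorem tendsto_sum_mul_log_add_atTop (hc : ∑ i ∈ s, c i = 0) :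
    Tendsto (fun a ↦ ∑ i ∈ s, c i * log (a + x i)) atTop (𝓝 0) := by
  have h := tendsto_finsetSum s fun i _ ↦ (tendsto_log_comp_add_sub_log (x i)).const_mul (c i)
  simp only [mul_zero, sum_const_zero] at h
  refine h.congr fun a ↦ ?_
  simp only [mul_sub, sum_sub_distrib, ← sum_mul, hc, zero_mul, sub_zero]

theorem sum_mul_log_neg_of_sum_div_add_pos (hx : ∀ i ∈ s, 0 < x i) (hc : ∑ i ∈ s, c i = 0)
    (hpos : ∀ a > 0, 0 < ∑ i ∈ s, c i / (a + x i)) :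
    ∑ i ∈ s, c i * log (x i) < 0 := by
  set f : ℝ → ℝ := fun a ↦ ∑ i ∈ s, c i * log (a + x i)
  have hf : ∀ a ≥ 0, HasDerivAt f (∑ i ∈ s, c i / (a + x i)) a := fun a ha ↦ by
    refine HasDerivAt.fun_sum fun i hi ↦ ?_
    simpa [div_eq_mul_inv] using
      (((hasDerivAt_id' a).add_const (x i)).log (by linarith [hx i hi])).const_mul (c i)
  have hmono : StrictMonoOn f (Set.Ici 0) := by
    refine strictMonoOn_of_hasDerivWithinAt_pos (convex_Ici 0)
      (fun a ha ↦ (hf a ha).continuousAt.continuousWithinAt)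
      (fun a ha ↦ (hf a (interior_subset ha)).hasDerivWithinAt) fun a ha ↦ ?_
    rw [interior_Ici] at ha
    exact hpos a ha
  have hf1 : f 1 ≤ 0 := ge_of_tendsto (tendsto_sum_mul_log_add_atTop hc) <| by
    filter_upwards [eventually_ge_atTop 1] with a ha
    exact hmono.monotoneOn (Set.mem_Ici.2 zero_le_one) (Set.mem_Ici.2 (zero_le_one.trans ha)) ha
  have hf01 : f 0 < f 1 := hmono Set.self_mem_Ici (Set.mem_Ici.2 zero_le_one) one_pos
  simpa [f] using hf01.trans_le hf1

end Real

theorem stmt_1_general (n : ℕ) (x : Fin n → ℝ)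
    (hpos : ∀ k, 0 < x k) (hdist : Function.Injective x)
    (q : ℕ) (hq2 : 2 ≤ q) (hqn : q ≤ n) :
    0 < (-1 : ℝ) ^ q * ∑ k, (x k ^ (n - q) * Real.log (x k)) /
        ∏ i ∈ Finset.univ.erase k, (x k - x i) := by
  set c : Fin n → ℝ := fun k ↦ (-1) ^ (q + 1) * (x k ^ (n - q) / ∏ i ∈ univ.erase k, (x k - x i))
  have hsign : (-1 : ℝ) ^ (q + 1) * (-1) ^ (n + (n - q) + 1) = 1 := by
    rw [← pow_add, show q + 1 + (n + (n - q) + 1) = 2 * (n + 1) by omega, pow_mul]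
    norm_num
  have hc : ∑ k, c k = 0 := by
    rw [← mul_sum, Lagrange.sum_pow_div_prod_sub_eq_zero hdist.injOn (by rw [card_fin]; omega), mul_zero]
  have hc_div : ∀ a > 0, 0 < ∑ k, c k / (a + x k) := fun a ha ↦ by
    simp_rw [c, mul_div_assoc, ← mul_sum]
    rw [Lagrange.sum_pow_div_prod_sub_div_add hdist.injOn (by rw [card_fin]; omega)
      fun i _ ↦ (add_pos ha (hpos i)).ne', card_fin, ← mul_assoc, hsign, one_mul]
    exact div_pos (pow_pos ha _) (prod_pos fun i _ ↦ add_pos ha (hpos i))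
  have key := Real.sum_mul_log_neg_of_sum_div_add_pos (fun k _ ↦ hpos k) hc hc_div
  rw [← neg_pos, ← sum_neg_distrib] at key
  rw [mul_sum]
  convert key using 2 with k
  ring

/-- For pairwise distinct positive reals summing to 1, the quantity
`(−1)^q ∑_k x_k^{n−q} ln x_k / ∏_{i≠k}(x_k − x_i)` (which equals ∂S/∂s_q) is positive. -/
theorem stmt_1 (n : ℕ) (hn : 2 ≤ n) (x : Fin n → ℝ)
    (hpos : ∀ k, 0 < x k) (hdist : Function.Injective x)
    (hsum : ∑ k, x k = 1)
    (q : ℕ) (hq2 : 2 ≤ q) (hqn : q ≤ n) :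
    0 < (-1 : ℝ) ^ q * ∑ k, (x k ^ (n - q) * Real.log (x k)) /
        ∏ i ∈ Finset.univ.erase k, (x k - x i) :=
  stmt_1_general n x hpos hdist q hq2 hqn
end

section
/- Let n ≥ 2 and let x_1,…,x_n be pairwise distinct reals (or complex numbers). Then ∑_{k=1}^n x_k^n / P_k = x_1 + x_2 + … + x_n, where P_k = ∏_{i≠k}(x_k − x_i). -/
/-!
The polynomial `X ^ n - ∏ (X - x_i)` has degree `< n` and takes the value `x_k ^ n` at each node
`x_k`, so it is its own Lagrange interpolant. Reading off its coefficient of `X ^ (n - 1)` gives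
`∑ x_k ^ n / P_k` on the interpolation side and `x_1 + ⋯ + x_n` (Vieta) on the other.
-/

open Polynomial Finset

namespace Lagrange

variable {R : Type*} [CommRing R] {ι : Type*}

theorem degree_X_pow_card_sub_nodal_lt [Nontrivial R] (s : Finset ι) (v : ι → R) :
    (X ^ #s - nodal s v).degree < (#s : WithBot ℕ) := by
  have h := degree_sub_lt_left (p := X ^ #s) (q := nodal s v)
    (by rw [degree_X_pow, degree_nodal]) (monic_X_pow _).ne_zero
    (by rw [(monic_X_pow _).leadingCoeff, nodal_monic.leadingCoeff])
  rwa [degree_X_pow] at h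

theorem coeff_X_pow_card_sub_nodal_card_sub_one (s : Finset ι) (v : ι → R) :
    (X ^ #s - nodal s v).coeff (#s - 1) = ∑ i ∈ s, v i := by
  nontriviality R
  rcases s.eq_empty_or_nonempty with rfl | hs
  · simp
  have hcard : #s - 1 ≠ #s := by have := hs.card_pos; omega
  rw [coeff_sub, coeff_X_pow, if_neg hcard, zero_sub, neg_eq_iff_eq_neg,
    ← prod_X_sub_C_nextCoeff, ← nodal_eq, nextCoeff, natDegree_nodal,
    if_neg hs.card_pos.ne']

theorem sum_pow_card_div_prod_sub {F : Type*} [Field F] [DecidableEq ι] {s : Finset ι}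
    {v : ι → F} (hvs : Set.InjOn v s) :
    ∑ i ∈ s, v i ^ #s / ∏ j ∈ s.erase i, (v i - v j) = ∑ i ∈ s, v i := by
  rw [← coeff_X_pow_card_sub_nodal_card_sub_one s v,
    coeff_eq_sum hvs (degree_X_pow_card_sub_nodal_lt s v)]
  refine sum_congr rfl fun i hi => ?_
  rw [eval_sub, eval_pow, eval_X, eval_nodal_at_node hi, sub_zero]

end Lagrange

theorem stmt_4_general (n : ℕ) (x : Fin n → ℝ)
    (hdist : Function.Injective x) :
    ∑ k, x k ^ n / ∏ i ∈ Finset.univ.erase k, (x k - x i) = ∑ k, x k := by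
  simpa using Lagrange.sum_pow_card_div_prod_sub (s := univ) hdist.injOn

/-- For pairwise distinct reals `x_1, …, x_n`,
`∑_k x_k^n / ∏_{i≠k}(x_k − x_i) = x_1 + … + x_n`. -/
theorem stmt_4 (n : ℕ) (hn : 2 ≤ n) (x : Fin n → ℝ)
    (hdist : Function.Injective x) :
    ∑ k, x k ^ n / ∏ i ∈ Finset.univ.erase k, (x k - x i) = ∑ k, x k :=
  stmt_4_general n x hdist
end

section
/- Let n ≥ 2 and let x_1,…,x_n be pairwise distinct strictly positive reals. For 2 ≤ q ≤ n define W_q(a) = (−1)^q · ∑_{k=1}^n ((x_k + a)^{n−q} · ln(x_k + a)) / P_k for a ≥ 0, where P_k = ∏_{i≠k}(x_k − x_i). Then for every q with 2 ≤ q ≤ n−1 and every a ≥ 0, the function W_q is differentiable at a with derivative W_q′(a) = −(n−q)·W_{q+1}(a). -/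
/-!
With `n - q = m + 1`, differentiating `(x_k + a)^(m+1) ln(x_k + a)` gives
`(m+1)(x_k + a)^m ln(x_k + a) + (x_k + a)^m`. The first terms reassemble into `-(n-q) W_{q+1}(a)`,
while the second ones sum to zero:
`∑_k y_k^m / ∏_{i≠k}(y_k - y_i)` is the coefficient of `X^(n-1)` in the Lagrange interpolant
of `X^m` at the distinct nodes `y_k = x_k + a`, which is `X^m` itself since `m < n - 1`.
-/

open Finset Polynomial

theorem sum_pow_div_prod_sub_eq_zero {F ι : Type*} [Field F] [DecidableEq ι] {s : Finset ι}
    {v : ι → F} (hvs : Set.InjOn v s) {m : ℕ} (hm : m + 1 < #s) :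
    ∑ i ∈ s, v i ^ m / ∏ j ∈ s.erase i, (v i - v j) = 0 := by
  have hdeg : (X ^ m : F[X]).degree < #s := by
    rw [degree_X_pow]
    exact_mod_cast (by omega : m < #s)
  simpa [coeff_X_pow, show #s - 1 ≠ m by omega] using (Lagrange.coeff_eq_sum hvs hdeg).symm

theorem Real.hasDerivAt_pow_succ_mul_log (m : ℕ) {t : ℝ} (ht : t ≠ 0) :
    HasDerivAt (fun t => t ^ (m + 1) * Real.log t) ((m + 1) * t ^ m * Real.log t + t ^ m) t := by
  refine ((hasDerivAt_pow (m + 1) t).mul (Real.hasDerivAt_log ht)).congr_deriv ?_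
  rw [Nat.add_sub_cancel, pow_succ, mul_inv_cancel_right₀ ht]
  push_cast
  ring

theorem stmt_10_general (n : ℕ) (x : Fin n → ℝ)
    (hpos : ∀ k, 0 < x k) (hdist : Function.Injective x)
    (W : ℕ → ℝ → ℝ)
    (hW : ∀ q a, W q a = (-1 : ℝ) ^ q * ∑ k, ((x k + a) ^ (n - q) * Real.log (x k + a)) /
        ∏ i ∈ Finset.univ.erase k, (x k - x i))
    (q : ℕ) (hq2 : 2 ≤ q) (hqn : q ≤ n - 1) (a : ℝ) (ha : 0 ≤ a) :
    HasDerivAt (W q) (-((n : ℝ) - q) * W (q + 1) a) a := by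
  obtain ⟨m, hm⟩ : ∃ m, n - q = m + 1 := ⟨n - q - 1, by omega⟩
  set P : Fin n → ℝ := fun k => ∏ i ∈ univ.erase k, (x k - x i)
  have hterm (k : Fin n) : HasDerivAt (fun b => (x k + b) ^ (m + 1) * Real.log (x k + b))
      ((m + 1) * (x k + a) ^ m * Real.log (x k + a) + (x k + a) ^ m) a :=
    (Real.hasDerivAt_pow_succ_mul_log m (by linarith [hpos k])).comp_const_add (x k) a
  have hvanish : ∑ k, (x k + a) ^ m / P k = 0 := by
    have hinj : Set.InjOn (fun k => x k + a) (univ : Finset (Fin n)) :=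
      fun i _ j _ h => hdist (add_right_cancel h)
    simpa [P, add_sub_add_right_eq_sub] using
      sum_pow_div_prod_sub_eq_zero hinj (by rw [card_univ, Fintype.card_fin]; omega)
  have hderiv := (HasDerivAt.fun_sum (u := univ) fun k _ => (hterm k).div_const (P k)).const_mul
    ((-1 : ℝ) ^ q)
  have hWq : W q = fun b => (-1 : ℝ) ^ q * ∑ k, (x k + b) ^ (m + 1) * Real.log (x k + b) / P k :=
    funext fun b => by rw [hW, hm]
  rw [hWq]
  refine hderiv.congr_deriv ?_
  have hcast : (n : ℝ) - q = m + 1 := by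
    rw [← Nat.cast_sub (by omega), hm]
    push_cast
    ring
  rw [hW, show n - (q + 1) = m by omega, hcast]
  simp only [add_div, sum_add_distrib, hvanish, mul_assoc, mul_div_assoc, ← mul_sum]
  ring

/-- The recursion `W_q′(a) = −(n−q)·W_{q+1}(a)` for
`W_q(a) = (−1)^q ∑_k (x_k+a)^{n−q} ln(x_k+a) / ∏_{i≠k}(x_k − x_i)`. -/
theorem stmt_10 (n : ℕ) (hn : 2 ≤ n) (x : Fin n → ℝ)
    (hpos : ∀ k, 0 < x k) (hdist : Function.Injective x)
    (W : ℕ → ℝ → ℝ)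
    (hW : ∀ q a, W q a = (-1 : ℝ) ^ q * ∑ k, ((x k + a) ^ (n - q) * Real.log (x k + a)) /
        ∏ i ∈ Finset.univ.erase k, (x k - x i))
    (q : ℕ) (hq2 : 2 ≤ q) (hqn : q ≤ n - 1) (a : ℝ) (ha : 0 ≤ a) :
    HasDerivAt (W q) (-((n : ℝ) - q) * W (q + 1) a) a :=
  stmt_10_general n x hpos hdist W hW q hq2 hqn a ha
end

section
/- Let n ≥ 2 and let x_1,…,x_n be pairwise distinct strictly positive reals. Define W_n(a) = (−1)^n · ∑_{k=1}^n ln(x_k + a) / P_k for a ≥ 0, where P_k = ∏_{i≠k}(x_k − x_i). Then for every a ≥ 0, W_n is differentiable at a with derivative W_n′(a) = −1 / ∏_{k=1}^n (a + x_k). -/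
/-!
Differentiating term by term gives `W_n′(a) = (−1)^n ∑_k 1 / ((x_k + a) P_k)`. Evaluating the
Lagrange interpolant of the constant `1` at `t = −a`, away from the nodes, gives the partial
fraction decomposition `∑_k 1 / ((t − x_k) P_k) = 1 / ∏_k (t − x_k)`, and the signs combine to
`−1 / ∏_k (a + x_k)`.
-/

open Finset Polynomial

section PartialFractions

variable {F ι : Type*} [Field F] [Fintype ι] [DecidableEq ι] [Nonempty ι]
  {x : ι → F}

theorem sum_inv_sub_div_prod_erase_sub (hx : Function.Injective x) {t : F}
    (ht : ∀ k, t ≠ x k) :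
    ∑ k, (t - x k)⁻¹ / ∏ i ∈ univ.erase k, (x k - x i) = (∏ k, (t - x k))⁻¹ := by
  have h := Lagrange.eval_interpolate_not_at_node (s := univ) (v := x) 1 (fun k _ => ht k)
  rw [Lagrange.interpolate_one hx.injOn univ_nonempty, eval_one, Lagrange.eval_nodal] at h
  rw [← eq_inv_of_mul_eq_one_right h.symm]
  refine sum_congr rfl fun k _ => ?_
  rw [Lagrange.nodalWeight, prod_inv_distrib, Pi.one_apply, mul_one, div_eq_mul_inv, mul_comm]

theorem neg_one_pow_card_mul_sum_inv_add_div_prod_erase_sub (hx : Function.Injective x)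
    {a : F} (ha : ∀ k, x k + a ≠ 0) :
    (-1) ^ Fintype.card ι * ∑ k, (x k + a)⁻¹ / ∏ i ∈ univ.erase k, (x k - x i) =
      -1 / ∏ k, (a + x k) := by
  have key := sum_inv_sub_div_prod_erase_sub hx (t := -a) fun k h => ha k (by rw [← h]; ring)
  have hsub : ∀ k, -a - x k = -(x k + a) := fun k => by ring
  simp only [hsub, prod_neg, inv_neg, neg_div, sum_neg_distrib, card_univ, mul_inv,
    neg_eq_iff_eq_neg] at key
  rw [key, mul_neg, ← mul_assoc, mul_inv_cancel₀ (pow_ne_zero _ (neg_ne_zero.2 one_ne_zero)),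
    one_mul, neg_div, one_div]
  simp only [add_comm a]

end PartialFractions

theorem hasDerivAt_sum_log_add_div {ι : Type*} (s : Finset ι) (c : ι → ℝ) {x : ι → ℝ} {a : ℝ} (ha : ∀ k, x k + a ≠ 0) :
    HasDerivAt (fun b => ∑ k ∈ s, Real.log (x k + b) / c k) (∑ k ∈ s, (x k + a)⁻¹ / c k) a := by
  refine HasDerivAt.fun_sum fun k _ => ?_
  simpa using (((hasDerivAt_id a).const_add (x k)).log (ha k)).div_const (c k)

/-- The derivative formula `W_n′(a) = −1 / ∏_k (a + x_k)` for
`W_n(a) = (−1)^n ∑_k ln(x_k+a) / ∏_{i≠k}(x_k − x_i)`. -/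
theorem stmt_11 (n : ℕ) (hn : 2 ≤ n) (x : Fin n → ℝ)
    (hpos : ∀ k, 0 < x k) (hdist : Function.Injective x)
    (W : ℝ → ℝ)
    (hW : ∀ a, W a = (-1 : ℝ) ^ n * ∑ k, Real.log (x k + a) /
        ∏ i ∈ Finset.univ.erase k, (x k - x i))
    (a : ℝ) (ha : 0 ≤ a) :
    HasDerivAt W (-1 / ∏ k, (a + x k)) a := by
  have : Nonempty (Fin n) := ⟨⟨0, by omega⟩⟩
  have hxa : ∀ k, x k + a ≠ 0 := fun k => (add_pos_of_pos_of_nonneg (hpos k) ha).ne'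
  have hderiv := (hasDerivAt_sum_log_add_div univ
    (fun k => ∏ i ∈ univ.erase k, (x k - x i)) hxa).const_mul ((-1 : ℝ) ^ n)
  have hval := neg_one_pow_card_mul_sum_inv_add_div_prod_erase_sub hdist hxa
  rw [Fintype.card_fin] at hval
  rw [hval] at hderiv
  rwa [funext hW]
end

section
/- Let n ≥ 2 and let x_1,…,x_n be pairwise distinct strictly positive reals. For 2 ≤ q ≤ n define W_q(a) = (−1)^q · ∑_{k=1}^n ((x_k + a)^{n−q} · ln(x_k + a)) / P_k, where P_k = ∏_{i≠k}(x_k − x_i). Then as a → ∞, a^{q−1}·W_q(a) tends to ∫_0^1 y^{q−2}(1−y)^{n−q} dy (the Beta integral B(q−1, n−q+1)); in particular W_q(a) → 0 as a → ∞ for every q with 2 ≤ q ≤ n. -/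
/-!
Writing `log (x + a) = log a + ∫₀¹ x / (a + s x) ds`, the `log a` part drops out because the
divided difference `∑ₖ p(xₖ) / Pₖ` of the polynomial `p = (X + a)^(n-q)`, of degree `< n - 1`,
vanishes. For each `s ∈ (0, 1]` the remaining sum is a partial-fraction expansion at the point
`z = -a/s` (note `a + s xₖ = -s (z - xₖ)`), which evaluates it in closed form:
`a^(q-1) W_q(a) = ∫₀¹ s^(q-2) (1-s)^(n-q) ∏ᵢ a / (a + s xᵢ) ds`.
The product lies in `(0, 1]` and tends to `1` as `a → ∞`, so dominated convergence gives the limit.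
-/

open Filter Topology Finset Polynomial Function Real intervalIntegral MeasureTheory

namespace Lagrange

variable {F ι : Type*} [Field F] [DecidableEq ι] {s : Finset ι} {v : ι → F}
  (hvs : Set.InjOn v s) {p : F[X]}
include hvs

theorem eval_div_prod_sub_eq_sum (hp : p.degree < #s) {z : F} (hz : ∀ i ∈ s, z ≠ v i) :
    p.eval z / ∏ i ∈ s, (z - v i) =
      ∑ i ∈ s, p.eval (v i) / ((z - v i) * ∏ j ∈ s.erase i, (v i - v j)) := by
  have hnodal : ∏ i ∈ s, (z - v i) ≠ 0 := prod_ne_zero_iff.2 fun i hi => sub_ne_zero.2 (hz i hi)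
  nth_rewrite 1 [eq_interpolate hvs hp]
  rw [eval_interpolate_not_at_node _ hz, eval_nodal, mul_div_cancel_left₀ _ hnodal]
  refine sum_congr rfl fun i _ => ?_
  rw [nodalWeight, prod_inv_distrib]
  field_simp

theorem sum_eval_div_prod_eq_zero (hp : p.natDegree + 1 < #s) :
    ∑ i ∈ s, p.eval (v i) / ∏ j ∈ s.erase i, (v i - v j) = 0 := by
  rw [← coeff_eq_sum hvs ((degree_le_natDegree).trans_lt (by exact_mod_cast (by omega))),
    coeff_eq_zero_of_natDegree_lt (by omega)]

end Lagrange

theorem integral_div_add_mul_eq_log_sub_log {a c : ℝ} (ha : 0 < a) (hc : 0 ≤ c) :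
    ∫ s in (0 : ℝ)..1, c / (a + s * c) = log (a + c) - log a := by
  have hpos : ∀ s ∈ Set.uIcc (0 : ℝ) 1, 0 < a + s * c := fun s hs => by
    rw [Set.uIcc_of_le zero_le_one] at hs
    exact add_pos_of_pos_of_nonneg ha (mul_nonneg hs.1 hc)
  have hderiv : ∀ s ∈ Set.uIcc (0 : ℝ) 1,
      HasDerivAt (fun s => log (a + s * c)) (c / (a + s * c)) s := fun s hs => by
    simpa using (((hasDerivAt_id s).mul_const c).const_add a).log (hpos s hs).ne'
  rw [integral_eq_sub_of_hasDerivAt hderiv]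
  · simp
  · exact (continuousOn_const.div (by fun_prop) fun s hs => (hpos s hs).ne').intervalIntegrable

theorem tendsto_div_add_const_atTop (c : ℝ) :
    Tendsto (fun a : ℝ => a / (a + c)) atTop (𝓝 1) := by
  have h : Tendsto (fun a : ℝ => (1 + c * a⁻¹)⁻¹) atTop (𝓝 (1 + c * 0)⁻¹) :=
    ((tendsto_inv_atTop_zero.const_mul c).const_add 1).inv₀ (by simp)
  rw [mul_zero, add_zero, inv_one] at h
  refine h.congr' ?_
  filter_upwards [eventually_ne_atTop 0] with a ha
  rw [← div_eq_mul_inv, ← div_self ha, ← add_div, inv_div]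

theorem tendsto_integral_mul_prod_div_add_mul {ι : Type*} [Fintype ι] {f : ℝ → ℝ}
    (hf : IntervalIntegrable f volume 0 1) {x : ι → ℝ} (hx : ∀ i, 0 ≤ x i) :
    Tendsto (fun a => ∫ s in (0 : ℝ)..1, f s * ∏ i, a / (a + s * x i)) atTop
      (𝓝 (∫ s in (0 : ℝ)..1, f s)) := by
  have hden : ∀ a s i, 0 ≤ s → a ≤ a + s * x i :=
    fun a s i hs => le_add_of_nonneg_right (mul_nonneg hs (hx i))
  have hle_one : ∀ a, 0 < a → ∀ s ∈ Set.uIoc (0 : ℝ) 1, ‖∏ i, a / (a + s * x i)‖ ≤ 1 := by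
    intro a ha s hs
    rw [Set.uIoc_of_le zero_le_one] at hs
    rw [norm_prod]
    refine prod_le_one (fun _ _ => norm_nonneg _) fun i _ => ?_
    have hden_pos := ha.trans_le (hden a s i hs.1.le)
    rw [Real.norm_of_nonneg (div_nonneg ha.le hden_pos.le)]
    exact div_le_one_of_le₀ (hden a s i hs.1.le) hden_pos.le
  refine tendsto_integral_filter_of_dominated_convergence (fun s => ‖f s‖) ?_ ?_ hf.norm ?_
  · filter_upwards [eventually_gt_atTop 0] with a ha
    rw [Set.uIoc_of_le zero_le_one]
    refine hf.aestronglyMeasurable.mul (f := f)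
      (ContinuousOn.aestronglyMeasurable ?_ measurableSet_Ioc)
    exact continuousOn_finsetProd _ fun i _ => continuousOn_const.div (by fun_prop)
      fun s hs => (ha.trans_le (hden a s i hs.1.le)).ne'
  · filter_upwards [eventually_gt_atTop 0] with a ha
    refine ae_of_all _ fun s hs => ?_
    rw [norm_mul]
    exact mul_le_of_le_one_right (norm_nonneg _) (hle_one a ha s hs)
  · refine ae_of_all _ fun s _ => ?_
    simpa using (tendsto_const_nhds (x := f s)).mul
      (tendsto_finsetProd univ fun i _ => tendsto_div_add_const_atTop (s * x i))

section DividedDifference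

variable {n q : ℕ} (hq : 2 ≤ q) (hqn : q ≤ n) {x : Fin n → ℝ} (hx : Injective x)
include hq hqn hx

theorem pow_mul_sum_div_add_mul_div_prod {a s : ℝ} (hs : s ≠ 0) (hxs : ∀ i, a + s * x i ≠ 0) :
    (-1) ^ q * a ^ (q - 1) *
        ∑ k, (x k + a) ^ (n - q) * (x k / (a + s * x k)) / ∏ i ∈ univ.erase k, (x k - x i) =
      s ^ (q - 2) * (1 - s) ^ (n - q) * ∏ i, a / (a + s * x i) := by
  obtain ⟨r, rfl⟩ : ∃ r, q = r + 2 := ⟨q - 2, by omega⟩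
  obtain ⟨m, rfl⟩ := Nat.exists_eq_add_of_le hqn
  simp only [Nat.add_sub_cancel_left, Nat.add_sub_cancel, Nat.add_succ_sub_one]
  have hsub : ∀ i, -(a / s) - x i = (a + s * x i) / -s := fun i => by field_simp; ring
  have hdeg :
      (X * (X + C a) ^ m).degree < ((univ : Finset (Fin (r + 2 + m))).card : WithBot ℕ) := by
    rw [card_univ, Fintype.card_fin]
    have : (X * (X + C a) ^ m).natDegree ≤ m + 1 := by compute_degree!; omega
    refine (degree_le_of_natDegree_le this).trans_lt ?_
    exact_mod_cast (by omega : m + 1 < r + 2 + m)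
  have key := Lagrange.eval_div_prod_sub_eq_sum hx.injOn hdeg (z := -(a / s))
    fun i _ => sub_ne_zero.1 (by rw [hsub]; exact div_ne_zero (hxs i) (neg_ne_zero.2 hs))
  simp only [eval_mul, eval_X, eval_pow, eval_add, eval_C, hsub, prod_div_distrib, prod_const,
    card_univ, Fintype.card_fin] at key
  have hterm : ∀ k, (x k + a) ^ m * (x k / (a + s * x k)) / ∏ i ∈ univ.erase k, (x k - x i) =
      (-s)⁻¹ * (x k * (x k + a) ^ m / ((a + s * x k) / -s * ∏ i ∈ univ.erase k, (x k - x i))) := by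
    intro k
    field_simp
  rw [sum_congr rfl fun k _ => hterm k, ← mul_sum, ← key, prod_div_distrib, prod_const, card_univ,
    Fintype.card_fin]
  have hprod : ∏ i, (a + s * x i) ≠ 0 := prod_ne_zero_iff.2 fun i _ => hxs i
  have hz : -(a / s) + a = a * (1 - s) / s * -1 := by field_simp; ring
  rw [hz, mul_pow, div_pow, mul_pow]
  field_simp
  ring_nf
  -- the leftover signs are `(-1) ^ (2 * r)` and `(-1) ^ (2 * m)`
  simp only [pow_mul', neg_one_sq, one_pow, mul_one]

theorem pow_mul_sum_pow_mul_log_div_prod_eq_integral (hx₀ : ∀ k, 0 ≤ x k) {a : ℝ} (ha : 0 < a) :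
    a ^ (q - 1) * ((-1) ^ q *
        ∑ k, (x k + a) ^ (n - q) * log (x k + a) / ∏ i ∈ univ.erase k, (x k - x i)) =
      ∫ s in (0 : ℝ)..1, s ^ (q - 2) * (1 - s) ^ (n - q) * ∏ i, a / (a + s * x i) := by
  have hlog : ∀ k, log (x k + a) = log a + ∫ s in (0 : ℝ)..1, x k / (a + s * x k) := fun k => by
    rw [integral_div_add_mul_eq_log_sub_log ha (hx₀ k), add_comm a]
    ring
  have hsum_pow : ∑ k, (x k + a) ^ (n - q) / ∏ i ∈ univ.erase k, (x k - x i) = 0 := by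
    have := Lagrange.sum_eval_div_prod_eq_zero hx.injOn (p := (X + C a) ^ (n - q))
      (by rw [natDegree_pow_X_add_C, card_fin]; omega)
    simpa only [eval_pow, eval_add, eval_X, eval_C] using this
  have hint : ∀ k, IntervalIntegrable
      (fun s => (x k + a) ^ (n - q) * (x k / (a + s * x k)) / ∏ i ∈ univ.erase k, (x k - x i))
      volume 0 1 := fun k => by
    refine ContinuousOn.intervalIntegrable ?_
    refine (continuousOn_const.mul
      (continuousOn_const.div (by fun_prop) fun s hs => ?_)).div_const _
    rw [Set.uIcc_of_le zero_le_one] at hs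
    exact (add_pos_of_pos_of_nonneg ha (mul_nonneg hs.1 (hx₀ k))).ne'
  have hsplit : ∑ k, (x k + a) ^ (n - q) * log (x k + a) / ∏ i ∈ univ.erase k, (x k - x i) =
      ∫ s in (0 : ℝ)..1,
        ∑ k, (x k + a) ^ (n - q) * (x k / (a + s * x k)) / ∏ i ∈ univ.erase k, (x k - x i) := by
    simp only [integral_finsetSum fun k _ => hint k, hlog, mul_add, add_div, sum_add_distrib,
      intervalIntegral.integral_div, intervalIntegral.integral_const_mul]
    rw [add_eq_right]
    simp_rw [mul_div_right_comm _ (log a), ← sum_mul, hsum_pow, zero_mul]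
  rw [hsplit, ← intervalIntegral.integral_const_mul, ← intervalIntegral.integral_const_mul]
  refine integral_congr_ae (ae_of_all _ fun s hs => ?_)
  rw [Set.uIoc_of_le zero_le_one] at hs
  rw [← mul_assoc, mul_comm (a ^ _)]
  exact pow_mul_sum_div_add_mul_div_prod hq hqn hx hs.1.ne'
    fun i => (add_pos_of_pos_of_nonneg ha (mul_nonneg hs.1.le (hx₀ i))).ne'

end DividedDifference

theorem stmt_12_general (n : ℕ) (x : Fin n → ℝ)
    (hpos : ∀ k, 0 < x k) (hdist : Function.Injective x)
    (q : ℕ) (hq2 : 2 ≤ q) (hqn : q ≤ n)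
    (W : ℝ → ℝ)
    (hW : ∀ a, W a = (-1 : ℝ) ^ q * ∑ k, ((x k + a) ^ (n - q) * Real.log (x k + a)) /
        ∏ i ∈ Finset.univ.erase k, (x k - x i)) :
    Filter.Tendsto (fun a => a ^ (q - 1) * W a) Filter.atTop
      (nhds (∫ y in (0 : ℝ)..1, y ^ (q - 2) * (1 - y) ^ (n - q)))
    ∧ Filter.Tendsto W Filter.atTop (nhds 0) := by
  have hlim : Tendsto (fun a => a ^ (q - 1) * W a) atTop
      (𝓝 (∫ y in (0 : ℝ)..1, y ^ (q - 2) * (1 - y) ^ (n - q))) := by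
    have hbeta : IntervalIntegrable (fun y : ℝ => y ^ (q - 2) * (1 - y) ^ (n - q)) volume 0 1 :=
      (by fun_prop : Continuous fun y : ℝ => y ^ (q - 2) * (1 - y) ^ (n - q)).intervalIntegrable ..
    refine (tendsto_integral_mul_prod_div_add_mul hbeta fun i => (hpos i).le).congr' ?_
    filter_upwards [eventually_gt_atTop 0] with a ha
    rw [hW, pow_mul_sum_pow_mul_log_div_prod_eq_integral hq2 hqn hdist (fun k => (hpos k).le) ha]
  refine ⟨hlim, ?_⟩
  have hdecay := ((tendsto_pow_atTop (by omega : q - 1 ≠ 0)).inv_tendsto_atTop).mul hlim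
  rw [zero_mul] at hdecay
  refine hdecay.congr' ?_
  filter_upwards [eventually_ne_atTop 0] with a ha
  exact inv_mul_cancel_left₀ (pow_ne_zero _ ha) _

/-- As `a → ∞`, `a^{q−1} W_q(a)` tends to the Beta integral
`∫_0^1 y^{q−2}(1−y)^{n−q} dy`; in particular `W_q(a) → 0` for `2 ≤ q ≤ n`. -/
theorem stmt_12 (n : ℕ) (hn : 2 ≤ n) (x : Fin n → ℝ)
    (hpos : ∀ k, 0 < x k) (hdist : Function.Injective x)
    (q : ℕ) (hq2 : 2 ≤ q) (hqn : q ≤ n)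
    (W : ℝ → ℝ)
    (hW : ∀ a, W a = (-1 : ℝ) ^ q * ∑ k, ((x k + a) ^ (n - q) * Real.log (x k + a)) /
        ∏ i ∈ Finset.univ.erase k, (x k - x i)) :
    Filter.Tendsto (fun a => a ^ (q - 1) * W a) Filter.atTop
      (nhds (∫ y in (0 : ℝ)..1, y ^ (q - 2) * (1 - y) ^ (n - q)))
    ∧ Filter.Tendsto W Filter.atTop (nhds 0) :=
  stmt_12_general n x hpos hdist q hq2 hqn W hW
end

section
/- Let n ≥ 2 and let x_1,…,x_n be pairwise distinct strictly positive reals with ∑_k x_k = 1. Define W_n(a) = (−1)^n · ∑_{k=1}^n ln(x_k + a) / P_k, where P_k = ∏_{i≠k}(x_k − x_i). Then for every a ≥ 0, W_n(a) ≥ 1 / ((n−1)·(a + 1/n)^{n−1}). In particular W_n(0) ≥ n^{n−1}/(n−1). -/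
/-!
Partial fractions give `W_n'(a) = -1 / ∏ (x_k + a)`, and `∑ 1 / P_k = 0` makes `W_n(a) → 0` as
`a → ∞`. The bound `G(a) = 1 / ((n - 1) (a + 1/n)^(n-1))` also tends to `0`, and its derivative
`-(a + 1/n)^(-n)` dominates `W_n'(a)` by AM-GM, `∏ (x_k + a) ≤ (a + 1/n)^n`. Hence `W_n - G`
decreases to `0` on `[a, ∞)`, so it is nonnegative.
-/

open Finset Filter Topology Real

section PartialFractions

variable {F ι : Type*} [Field F] [DecidableEq ι] {s : Finset ι} {v : ι → F}

theorem sum_inv_prod_sub_eq_zero (hv : Set.InjOn v s) (hs : 2 ≤ #s) :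
    ∑ i ∈ s, (∏ j ∈ s.erase i, (v i - v j))⁻¹ = 0 := by
  have h := Lagrange.coeff_eq_sum hv (P := 1) (by
    rw [Polynomial.degree_one]; exact_mod_cast (by omega : 0 < #s))
  simp only [Polynomial.coeff_one, Polynomial.eval_one, one_div] at h
  rw [← h, if_neg (by omega)]

theorem inv_prod_sub_eq_sum_mul_inv_sub (hv : Set.InjOn v s) (hs : s.Nonempty) {x : F}
    (hx : ∀ i ∈ s, x ≠ v i) :
    (∏ i ∈ s, (x - v i))⁻¹ = ∑ i ∈ s, (∏ j ∈ s.erase i, (v i - v j))⁻¹ * (x - v i)⁻¹ := by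
  have h := Lagrange.eval_interpolate_not_at_node 1 hx
  simp only [Lagrange.interpolate_one hv hs, Polynomial.eval_one, Pi.one_apply, mul_one,
    Lagrange.eval_nodal, Lagrange.nodalWeight, prod_inv_distrib] at h
  exact inv_eq_of_mul_eq_one_right h.symm

theorem sum_inv_add_div_prod_sub (hv : Set.InjOn v s) (hs : s.Nonempty) {t : F}
    (ht : ∀ i ∈ s, v i + t ≠ 0) :
    ∑ i ∈ s, (v i + t)⁻¹ / ∏ j ∈ s.erase i, (v i - v j)
      = -(-1) ^ #s * (∏ i ∈ s, (v i + t))⁻¹ := by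
  have h := inv_prod_sub_eq_sum_mul_inv_sub hv hs (x := -t) fun i hi h =>
    ht i hi (by rw [← h]; ring)
  have hneg : ∀ i, -t - v i = -(v i + t) := fun i => by ring
  simp only [hneg, prod_neg, inv_neg, mul_neg, sum_neg_distrib, mul_inv, ← inv_pow,
    inv_one] at h
  rw [neg_mul, h, neg_neg]
  exact sum_congr rfl fun i _ => by rw [div_eq_mul_inv, mul_comm]

end PartialFractions

theorem Real.prod_le_sum_div_card_pow {ι : Type*} (s : Finset ι) (z : ι → ℝ)
    (hz : ∀ i ∈ s, 0 ≤ z i) : ∏ i ∈ s, z i ≤ ((∑ i ∈ s, z i) / #s) ^ #s := by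
  rcases s.eq_empty_or_nonempty with rfl | hs
  · simp
  have hcard : (#s : ℝ) ≠ 0 := by exact_mod_cast hs.card_pos.ne'
  have amgm := Real.geom_mean_le_arith_mean_weighted s (fun _ => (#s : ℝ)⁻¹) z
    (fun _ _ => by positivity) (by simp [hcard]) hz
  rw [Real.finsetProd_rpow s z hz, ← Finset.mul_sum, inv_mul_eq_div] at amgm
  calc ∏ i ∈ s, z i = ((∏ i ∈ s, z i) ^ (#s : ℝ)⁻¹) ^ #s :=
        (Real.rpow_inv_natCast_pow (prod_nonneg hz) hs.card_pos.ne').symm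
    _ ≤ ((∑ i ∈ s, z i) / #s) ^ #s := by gcongr; exact Real.rpow_nonneg (prod_nonneg hz) _

theorem prod_add_le_add_one_div_card_pow {ι : Type*} {s : Finset ι} {x : ι → ℝ} {t : ℝ}
    (hxt : ∀ i ∈ s, 0 ≤ x i + t) (hsum : ∑ i ∈ s, x i = 1) :
    ∏ i ∈ s, (x i + t) ≤ (t + 1 / #s) ^ #s := by
  have hs : (#s : ℝ) ≠ 0 := by
    rintro hs
    simp [Finset.card_eq_zero.1 (by exact_mod_cast hs)] at hsum
  have hmean : (∑ i ∈ s, (x i + t)) / #s = t + 1 / #s := by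
    rw [sum_add_distrib, hsum, sum_const, nsmul_eq_mul]
    field_simp
    ring
  simpa only [hmean] using Real.prod_le_sum_div_card_pow s _ hxt

section SumLogDivProdSub

variable {ι : Type*} {s : Finset ι}

theorem hasDerivAt_sum_log_add_div_prod_sub [DecidableEq ι] {v : ι → ℝ} (hv : Set.InjOn v s)
    (hs : s.Nonempty) {t : ℝ} (ht : ∀ i ∈ s, 0 < v i + t) :
    HasDerivAt (fun a => (-1) ^ #s * ∑ i ∈ s, log (v i + a) / ∏ j ∈ s.erase i, (v i - v j))
      (-(∏ i ∈ s, (v i + t))⁻¹) t := by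
  have hterm : ∀ i ∈ s, HasDerivAt (fun a => log (v i + a) / ∏ j ∈ s.erase i, (v i - v j))
      ((v i + t)⁻¹ / ∏ j ∈ s.erase i, (v i - v j)) t := fun i hi => by
    simpa using (((hasDerivAt_id t).const_add (v i)).log (ht i hi).ne').div_const _
  refine ((HasDerivAt.fun_sum hterm).const_mul ((-1 : ℝ) ^ #s)).congr_deriv ?_
  rw [sum_inv_add_div_prod_sub hv hs fun i hi => (ht i hi).ne', ← mul_assoc, mul_neg,
    ← mul_pow, neg_one_mul, neg_neg, one_pow, neg_one_mul]

theorem tendsto_sum_log_add_div_atTop {y d : ι → ℝ} (hd : ∑ i ∈ s, (d i)⁻¹ = 0) :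
    Tendsto (fun t => ∑ i ∈ s, log (y i + t) / d i) atTop (𝓝 0) := by
  have hshift : ∀ t, ∑ i ∈ s, log (y i + t) / d i = ∑ i ∈ s, (log (t + y i) - log t) / d i :=
    fun t => by
      simp_rw [div_eq_mul_inv, sub_mul, sum_sub_distrib, ← mul_sum, hd, mul_zero, sub_zero,
        add_comm (y _)]
  simp only [hshift]
  simpa using tendsto_finsetSum s fun i _ => (tendsto_log_comp_add_sub_log (y i)).div_const (d i)

end SumLogDivProdSub

theorem hasDerivAt_one_div_mul_pow {n : ℕ} (hn : 2 ≤ n) {c t : ℝ} (ht : t + c ≠ 0) :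
    HasDerivAt (fun a => 1 / (((n : ℝ) - 1) * (a + c) ^ (n - 1))) (-((t + c) ^ n)⁻¹) t := by
  obtain ⟨m, rfl⟩ : ∃ m, n = m + 2 := ⟨n - 2, by omega⟩
  have hm : (m : ℝ) + 1 ≠ 0 := by positivity
  simp only [one_div, show m + 2 - 1 = m + 1 by omega, Nat.cast_add, Nat.cast_ofNat,
    show (m : ℝ) + 2 - 1 = m + 1 by ring]
  refine ((((hasDerivAt_id' t).add_const c).fun_pow (m + 1)).const_mul ((m : ℝ) + 1)).inv
    (by positivity) |>.congr_deriv ?_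
  push_cast
  field_simp
  ring

theorem tendsto_one_div_mul_pow_atTop {n : ℕ} (hn : 2 ≤ n) (c : ℝ) :
    Tendsto (fun a => 1 / (((n : ℝ) - 1) * (a + c) ^ (n - 1))) atTop (𝓝 0) := by
  have hn1 : (0 : ℝ) < n - 1 := by
    have : (2 : ℝ) ≤ n := by exact_mod_cast hn
    linarith
  simp only [one_div]
  exact ((tendsto_pow_atTop (by omega)).comp (tendsto_atTop_add_const_right _ c tendsto_id)
    |>.const_mul_atTop hn1).inv_tendsto_atTop

theorem le_of_hasDerivAt_le_of_tendsto_zero {f g f' g' : ℝ → ℝ} {a : ℝ}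
    (hf : ∀ t, a ≤ t → HasDerivAt f (f' t) t) (hg : ∀ t, a ≤ t → HasDerivAt g (g' t) t)
    (hle : ∀ t, a ≤ t → f' t ≤ g' t) (hf0 : Tendsto f atTop (𝓝 0))
    (hg0 : Tendsto g atTop (𝓝 0)) : g a ≤ f a := by
  have hanti : AntitoneOn (f - g) (Set.Ici a) := by
    refine antitoneOn_of_hasDerivWithinAt_nonpos (f' := f' - g') (convex_Ici a)
      (fun t ht => ((hf t ht).sub (hg t ht)).continuousAt.continuousWithinAt)
      (fun t ht => ?_) fun t ht => ?_
    all_goals rw [interior_Ici] at ht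
    · exact ((hf t ht.le).sub (hg t ht.le)).hasDerivWithinAt
    · exact sub_nonpos.2 (hle t ht.le)
  have hlim := hf0.sub hg0
  rw [sub_zero] at hlim
  refine sub_nonneg.1 <| le_of_tendsto hlim ?_
  filter_upwards [eventually_ge_atTop a] with t hat
  exact hanti Set.self_mem_Ici hat hat

/-- The lower bound `W_n(a) ≥ 1/((n−1)(a+1/n)^{n−1})` for all `a ≥ 0`; in particular
`W_n(0) ≥ n^{n−1}/(n−1)`. -/
theorem stmt_13 (n : ℕ) (hn : 2 ≤ n) (x : Fin n → ℝ)
    (hpos : ∀ k, 0 < x k) (hdist : Function.Injective x)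
    (hsum : ∑ k, x k = 1)
    (W : ℝ → ℝ)
    (hW : ∀ a, W a = (-1 : ℝ) ^ n * ∑ k, Real.log (x k + a) /
        ∏ i ∈ Finset.univ.erase k, (x k - x i)) :
    (∀ a : ℝ, 0 ≤ a → 1 / (((n : ℝ) - 1) * (a + 1 / n) ^ (n - 1)) ≤ W a)
    ∧ (n : ℝ) ^ (n - 1) / ((n : ℝ) - 1) ≤ W 0 := by
  have hcard : #(univ : Finset (Fin n)) = n := card_fin n
  have hnodes : Set.InjOn x (univ : Finset (Fin n)) := hdist.injOn
  have hne : (univ : Finset (Fin n)).Nonempty := univ_nonempty_iff.2 ⟨⟨0, by omega⟩⟩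
  have hW' : W = fun a => (-1) ^ #(univ : Finset (Fin n)) *
      ∑ k, log (x k + a) / ∏ i ∈ univ.erase k, (x k - x i) :=
    funext fun a => by rw [hW, hcard]
  have hxt : ∀ t, 0 ≤ t → ∀ k, 0 < x k + t := fun t ht k => by linarith [hpos k]
  have hWlim : Tendsto W atTop (𝓝 0) := by
    rw [hW']
    simpa only [mul_zero] using (tendsto_sum_log_add_div_atTop (y := x)
      (sum_inv_prod_sub_eq_zero hnodes (hcard.symm ▸ hn))).const_mul _
  have hbound : ∀ a : ℝ, 0 ≤ a → 1 / (((n : ℝ) - 1) * (a + 1 / n) ^ (n - 1)) ≤ W a :=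
    fun a ha => le_of_hasDerivAt_le_of_tendsto_zero
      (fun t hat => hW' ▸ hasDerivAt_sum_log_add_div_prod_sub hnodes hne fun k _ =>
        hxt t (ha.trans hat) k)
      (fun t hat => hasDerivAt_one_div_mul_pow hn (by have := ha.trans hat; positivity))
      (fun t hat => neg_le_neg <| inv_anti₀ (prod_pos fun k _ => hxt t (ha.trans hat) k) <| by
        simpa only [hcard] using prod_add_le_add_one_div_card_pow
          (fun k _ => (hxt t (ha.trans hat) k).le) hsum)
      hWlim (tendsto_one_div_mul_pow_atTop hn _)
  refine ⟨hbound, ?_⟩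
  convert hbound 0 le_rfl using 1
  simp only [zero_add, one_div, inv_pow]
  field_simp
end

section
/- Let n ≥ 2 and fix q with 2 ≤ q ≤ n. Let f : ℝ → ℝ be f(x) = (−1)^q · x^{n−q} · ln x for x > 0. Then the (n−1)-st derivative of f is strictly positive at every x with 0 < x < 1; indeed f^{(n−1)}(x) = (n−q)!·(q−2)!·x^{1−q} for all x > 0. -/
/-!
For `k ≤ m` the `k`-th derivative of `c x^m log x` on `x > 0` has the shape
`c m(m-1)⋯(m-k+1) x^(m-k) log x + b x^(m-k)`; the constant `b` never needs to be known, since at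
`k = m` the term `b` is constant and `c m! log x` differentiates to `c m! x⁻¹`. From there on only
`x⁻¹` is differentiated, giving `c m! (-1)^j j! x^(-(j+1))` after `m + 1 + j` steps. With
`c = (-1)^q`, `m = n - q`, `j = q - 2` the signs cancel.
-/

open Set Real
open scoped Nat

theorem iteratedDerivWithin_succ_eqOn_of_hasDerivAt {s : Set ℝ} {f g g' : ℝ → ℝ} {k : ℕ}
    (hs : IsOpen s) (hk : EqOn (iteratedDerivWithin k f s) g s)
    (hg : ∀ x ∈ s, HasDerivAt g (g' x) x) :
    EqOn (iteratedDerivWithin (k + 1) f s) g' s := by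
  intro x hx
  rw [iteratedDerivWithin_succ, derivWithin_congr hk (hk hx), derivWithin_of_isOpen hs hx,
    (hg x hx).deriv]

theorem hasDerivAt_pow_succ_mul_log_add (A B : ℝ) (e : ℕ) {x : ℝ} (hx : 0 < x) :
    HasDerivAt (fun y => A * y ^ (e + 1) * log y + B * y ^ (e + 1))
      (A * (e + 1) * x ^ e * log x + (A + B * (e + 1)) * x ^ e) x := by
  have hpow := hasDerivAt_pow (e + 1) x
  have h := ((hpow.const_mul A).mul (hasDerivAt_log hx.ne')).add (hpow.const_mul B)
  refine h.congr_deriv ?_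
  rw [Nat.add_sub_cancel, pow_succ]
  field_simp
  push_cast
  ring

theorem exists_eqOn_iteratedDerivWithin_const_mul_pow_mul_log_of_le (c : ℝ) (m : ℕ) {k : ℕ}
    (hk : k ≤ m) :
    ∃ b : ℝ, EqOn (iteratedDerivWithin k (fun y => c * y ^ m * log y) (Ioi 0))
      (fun y => c * m.descFactorial k * y ^ (m - k) * log y + b * y ^ (m - k)) (Ioi 0) := by
  induction k with
  | zero => exact ⟨0, fun y _ => by simp⟩
  | succ k ih =>
    obtain ⟨b, hb⟩ := ih (by omega)
    obtain ⟨e, he⟩ : ∃ e, m - k = e + 1 := ⟨m - (k + 1), by omega⟩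
    refine ⟨c * m.descFactorial k + b * (e + 1), ?_⟩
    rw [he] at hb
    refine iteratedDerivWithin_succ_eqOn_of_hasDerivAt isOpen_Ioi hb fun x hx => ?_
    refine (hasDerivAt_pow_succ_mul_log_add (c * m.descFactorial k) b e hx).congr_deriv ?_
    have hmk : ((m - k : ℕ) : ℝ) = e + 1 := by rw [he]; push_cast; ring
    rw [Nat.descFactorial_succ, show m - (k + 1) = e by omega, Nat.cast_mul, hmk]
    ring

theorem eqOn_iteratedDerivWithin_const_mul_pow_mul_log_succ_add (c : ℝ) (m j : ℕ) :
    EqOn (iteratedDerivWithin (m + 1 + j) (fun y => c * y ^ m * log y) (Ioi 0))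
      (fun y => c * m ! * (-1) ^ j * j ! * y ^ (-(j + 1 : ℤ))) (Ioi 0) := by
  induction j with
  | zero =>
    obtain ⟨b, hb⟩ := exists_eqOn_iteratedDerivWithin_const_mul_pow_mul_log_of_le c m le_rfl
    refine iteratedDerivWithin_succ_eqOn_of_hasDerivAt isOpen_Ioi hb fun x hx => ?_
    simp only [Nat.descFactorial_self, Nat.sub_self, pow_zero, mul_one]
    refine (((hasDerivAt_log hx.ne').const_mul _).add_const b).congr_deriv ?_
    simp
  | succ j ih =>
    refine iteratedDerivWithin_succ_eqOn_of_hasDerivAt isOpen_Ioi ih fun x hx => ?_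
    refine ((hasDerivAt_zpow (-(j + 1 : ℤ)) x (Or.inl hx.ne')).const_mul
      (c * m ! * (-1) ^ j * j !)).congr_deriv ?_
    rw [show -((j + 1 : ℕ) + 1 : ℤ) = -(j + 1) - 1 by push_cast; ring]
    push_cast [Nat.factorial_succ, pow_succ]
    ring

theorem stmt_16_general (n : ℕ) (q : ℕ) (hq2 : 2 ≤ q) (hqn : q ≤ n)
    (f : ℝ → ℝ) (hf : ∀ x : ℝ, f x = (-1 : ℝ) ^ q * x ^ (n - q) * Real.log x) :
    (∀ x : ℝ, 0 < x → x < 1 → 0 < iteratedDerivWithin (n - 1) f (Set.Ioi 0) x)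
    ∧ ∀ x : ℝ, 0 < x → iteratedDerivWithin (n - 1) f (Set.Ioi 0) x
        = ((n - q).factorial : ℝ) * ((q - 2).factorial : ℝ) * x ^ (1 - (q : ℤ)) := by
  have hformula : ∀ x : ℝ, 0 < x → iteratedDerivWithin (n - 1) f (Ioi 0) x
      = ((n - q)! : ℝ) * ((q - 2)! : ℝ) * x ^ (1 - (q : ℤ)) := by
    intro x hx
    have hsign : (-1 : ℝ) ^ q * (-1) ^ (q - 2) = 1 := by
      rw [← pow_add]
      exact Even.neg_one_pow ⟨q - 1, by omega⟩
    rw [show f = fun y => (-1 : ℝ) ^ q * y ^ (n - q) * log y from funext hf,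
      show n - 1 = n - q + 1 + (q - 2) by omega,
      eqOn_iteratedDerivWithin_const_mul_pow_mul_log_succ_add _ _ _ hx,
      show -((q - 2 : ℕ) + 1 : ℤ) = 1 - q by omega]
    linear_combination ((n - q)! * (q - 2)! * x ^ (1 - (q : ℤ)) : ℝ) * hsign
  exact ⟨fun x hx _ => hformula x hx ▸ by positivity, hformula⟩

/-- For `f(x) = (−1)^q x^{n−q} ln x`, the `(n−1)`-st derivative of `f` on the domain
`x > 0` is `(n−q)!·(q−2)!·x^{1−q}`, which is strictly positive for `0 < x < 1`
(indeed for all `x > 0`). -/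
theorem stmt_16 (n : ℕ) (hn : 2 ≤ n) (q : ℕ) (hq2 : 2 ≤ q) (hqn : q ≤ n)
    (f : ℝ → ℝ) (hf : ∀ x : ℝ, f x = (-1 : ℝ) ^ q * x ^ (n - q) * Real.log x) :
    (∀ x : ℝ, 0 < x → x < 1 → 0 < iteratedDerivWithin (n - 1) f (Set.Ioi 0) x)
    ∧ ∀ x : ℝ, 0 < x → iteratedDerivWithin (n - 1) f (Set.Ioi 0) x
        = ((n - q).factorial : ℝ) * ((q - 2).factorial : ℝ) * x ^ (1 - (q : ℤ)) :=
  stmt_16_general n q hq2 hqn f hf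
end
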